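/- Let F be a weakly convex sparseness measure with parameter ρ ≤ 0, J(x) = Σ_{i=1}^N F(x_i), let γ ∈ [0,1) be a null-space constant bound for (J,A,K), M0 > 0, and let C1, C2, C3, C4, C5 be the associated constants. Let ‖x*‖₀ ≤ K, y = A x* + e, ‖I − A AᵀB‖₂ ≤ ζ < 1, κ > 0, μ > 1, and d = ‖I − AᵀBA‖₂². Suppose x ∈ ℝ^N satisfies ‖x − x*‖₂ ≤ M0, (−4ρ)·‖x − x*‖₂ ≤ C1, ‖y − A x‖₂ ≤ C5·κ, and ‖x − x*‖₂ ≥ μ·C3·κ + C4·‖e‖₂. Then for any gradient selection g with g_i ∈ ∂F(x_i), the next APGG iterate x⁺ = AᵀB y + (I − AᵀBA)(x − κ·g) satisfies ‖x⁺ − x*‖₂² ≤ ‖x − x*‖₂² − (μ−1)·d·α²·N·κ². -/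

import Mathlib

open Filter Set

/-- Weak convexity on `[0,∞)` with parameter `ρ`. -/
def WeaklyConvexOnNonneg (F : ℝ → ℝ) (ρ : ℝ) : Prop :=
  ∀ t₁ t₂ : ℝ, 0 ≤ t₁ → 0 ≤ t₂ → ∀ l : ℝ, 0 ≤ l → l ≤ 1 →
    F (l * t₁ + (1 - l) * t₂) ≤
      l * F t₁ + (1 - l) * F t₂ - ρ * l * (1 - l) * (t₁ - t₂) ^ 2

/-- `F` is a weakly convex sparseness measure with weak-convexity parameter `ρ ≤ 0`. -/
structure IsWCSM (F : ℝ → ℝ) (ρ : ℝ) : Prop where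
  zero : F 0 = 0
  even : ∀ t, F (-t) = F t
  nontrivial : ∃ t, F t ≠ 0
  mono : ∀ s t : ℝ, 0 ≤ s → s ≤ t → F s ≤ F t
  ratio_anti : ∀ s t : ℝ, 0 < s → s ≤ t → F t / t ≤ F s / s
  rho_nonpos : ρ ≤ 0
  wconv : WeaklyConvexOnNonneg F ρ

/-- `α = lim_{t→0⁺} F(t)/t`, finite and positive, with `F(t) ≤ α|t|` for all `t`. -/
def IsAlpha (F : ℝ → ℝ) (α : ℝ) : Prop :=
  0 < α ∧ Tendsto (fun t => F t / t) (nhdsWithin 0 (Set.Ioi 0)) (nhds α) ∧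
    ∀ t : ℝ, F t ≤ α * |t|

/-- The generalized gradient set `∂F(t)`; by convention `∂F(0) = {0}`. -/
noncomputable def genGrad (F : ℝ → ℝ) (t : ℝ) : Set ℝ :=
  if t = 0 then {0}
  else {f : ℝ | ∀ ν : ℝ,
    ν * f ≤ Filter.limsup (fun θ => (F (t + θ * ν) - F t) / θ) (nhdsWithin 0 (Set.Ioi 0))}

/-- Euclidean (`ℓ2`) norm of a vector. -/
noncomputable def l2 {n : ℕ} (x : Fin n → ℝ) : ℝ := Real.sqrt (∑ i, (x i) ^ 2)

/-- `ℓ1` norm of a vector. -/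
def l1 {n : ℕ} (x : Fin n → ℝ) : ℝ := ∑ i, |x i|

/-- `ℓ0` "norm": number of nonzero entries. -/
noncomputable def l0 {n : ℕ} (x : Fin n → ℝ) : ℕ :=
  (Finset.univ.filter (fun i => x i ≠ 0)).card

/-- `z_S`: the vector equal to `z` on `S` and zero elsewhere. -/
def restr {n : ℕ} (x : Fin n → ℝ) (S : Finset (Fin n)) : Fin n → ℝ :=
  fun i => if i ∈ S then x i else 0

/-- `γ` is a null-space-constant bound for `(J, A, K)`. -/
def NSCBound {M N : ℕ} (J : (Fin N → ℝ) → ℝ) (A : Matrix (Fin M) (Fin N) ℝ)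
    (K : ℕ) (γ : ℝ) : Prop :=
  ∀ z : Fin N → ℝ, A.mulVec z = 0 → ∀ S : Finset (Fin N), S.card ≤ K →
    J (restr z S) ≤ γ * J (restr z Sᶜ)

/-- Spectral norm (`ℓ2`-operator norm) of a matrix. -/
noncomputable def opNorm2 {m n : ℕ} (A : Matrix (Fin m) (Fin n) ℝ) : ℝ :=
  sSup {c : ℝ | ∃ v : Fin n → ℝ, l2 v ≤ 1 ∧ c = l2 (A.mulVec v)}

/-!
Write `h = x - x*`, `r = y - A x`, `P = I - AᵀBA` and `Q = I - AAᵀB`. Then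
`x⁺ - x* = (h - κ P g) + AᵀB r`, and expanding the square leaves `‖h‖²` plus the gain
`-2κ⟪h, P g⟫ ≈ -2κ⟪h, g⟫` plus error terms of size `κ²` and `κ (‖e‖ + ‖r‖)` (using `A P = Q A`
and `A AᵀB = I - Q`). Split `h = z + v` with `z ∈ ker A` and `v ⊥ ker A`. The null space
property, applied to `z`, bounds `J x - J x*` from below by `C1 ‖h‖ - (C1 + α√N) ‖v‖`, the
weak-convexity subgradient inequality turns this into a lower bound on `⟪h, g⟫`, and
`σ ‖v‖ ≤ ‖A h‖ ≤ ‖e‖ + ‖r‖` controls `v`. Since `‖h‖ ≥ μ C3 κ + C4 ‖e‖`, the gain pays for all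
error terms and leaves the margin `(μ - 1) d α² N κ²`.
-/

open Matrix Topology

section L2

variable {n : ℕ}

lemma l2_eq_norm (x : Fin n → ℝ) : l2 x = ‖WithLp.toLp 2 x‖ := by
  simp [l2, EuclideanSpace.norm_eq]

lemma l2_nonneg (x : Fin n → ℝ) : 0 ≤ l2 x := Real.sqrt_nonneg _

lemma l2_sq (x : Fin n → ℝ) : l2 x ^ 2 = ∑ i, x i ^ 2 :=
  Real.sq_sqrt (by positivity)

lemma l2_add_le (x y : Fin n → ℝ) : l2 (x + y) ≤ l2 x + l2 y := by
  simpa only [l2_eq_norm, WithLp.toLp_add] using norm_add_le _ _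

lemma l2_smul (c : ℝ) (x : Fin n → ℝ) : l2 (c • x) = |c| * l2 x := by
  simp only [l2_eq_norm, WithLp.toLp_smul, norm_smul, Real.norm_eq_abs]

lemma l2_neg (x : Fin n → ℝ) : l2 (-x) = l2 x := by
  simp [l2]

lemma l2_abs (x : Fin n → ℝ) : l2 (fun i => |x i|) = l2 x := by
  simp [l2]

lemma l2_le_l2 {x y : Fin n → ℝ} (h : ∀ i, |x i| ≤ |y i|) : l2 x ≤ l2 y :=
  Real.sqrt_le_sqrt <| Finset.sum_le_sum fun i _ => sq_le_sq.2 (h i)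

lemma abs_le_l2 (x : Fin n → ℝ) (i : Fin n) : |x i| ≤ l2 x := by
  rw [← Real.sqrt_sq_eq_abs]
  exact Real.sqrt_le_sqrt <|
    Finset.single_le_sum (f := fun i => x i ^ 2) (fun i _ => sq_nonneg _) (Finset.mem_univ i)

lemma l2_le_sum {x : Fin n → ℝ} (h : ∀ i, 0 ≤ x i) : l2 x ≤ ∑ i, x i := by
  rw [← Real.sqrt_sq (Finset.sum_nonneg fun i _ => h i)]
  exact Real.sqrt_le_sqrt <| Finset.sum_sq_le_sq_sum_of_nonneg fun i _ => h i

lemma l2_const (c : ℝ) : l2 (fun _ : Fin n => c) = Real.sqrt n * |c| := by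
  simp [l2, Real.sqrt_mul (Nat.cast_nonneg n), Real.sqrt_sq_eq_abs]

lemma l2_le_of_abs_le {x : Fin n → ℝ} {c : ℝ} (hc : 0 ≤ c) (h : ∀ i, |x i| ≤ c) :
    l2 x ≤ c * Real.sqrt n :=
  (l2_le_l2 fun i => (h i).trans (le_abs_self c)).trans_eq <| by
    rw [l2_const, abs_of_nonneg hc, mul_comm]

lemma dotProduct_le_l2_mul_l2 (x y : Fin n → ℝ) : x ⬝ᵥ y ≤ l2 x * l2 y :=
  Real.sum_mul_le_sqrt_mul_sqrt _ x y

lemma sum_abs_le_sqrt_mul_l2 (x : Fin n → ℝ) : ∑ i, |x i| ≤ Real.sqrt n * l2 x := by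
  simpa [dotProduct, l2_abs, l2_const] using
    dotProduct_le_l2_mul_l2 (fun _ => 1) (fun i => |x i|)

lemma l2_sq_eq_dotProduct (x : Fin n → ℝ) : l2 x ^ 2 = x ⬝ᵥ x := by
  rw [l2_sq]; simp only [dotProduct, sq]

lemma l2_add_sq (x y : Fin n → ℝ) : l2 (x + y) ^ 2 = l2 x ^ 2 + 2 * (x ⬝ᵥ y) + l2 y ^ 2 := by
  simp only [l2_sq_eq_dotProduct, add_dotProduct, dotProduct_add, dotProduct_comm y x]
  ring

lemma l2_sub_smul_sq (x y : Fin n → ℝ) (c : ℝ) :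
    l2 (x - c • y) ^ 2 = l2 x ^ 2 - 2 * c * (x ⬝ᵥ y) + c ^ 2 * l2 y ^ 2 := by
  simp only [l2_sq_eq_dotProduct, sub_dotProduct, dotProduct_sub, smul_dotProduct,
    dotProduct_smul, dotProduct_comm y x, smul_eq_mul]
  ring

lemma l2_add_le_sum_min_add {z v : Fin n → ℝ} {M0 : ℝ} (h : l2 (z + v) ≤ M0) :
    l2 (z + v) ≤ ∑ i, min |z i| M0 + l2 v := by
  have hcoord : ∀ i, |(z + v) i| ≤ min |z i| M0 + |v i| := fun i => by
    have := (abs_le_l2 (z + v) i).trans h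
    rcases min_cases |z i| M0 with ⟨hm, _⟩ | ⟨hm, _⟩ <;> rw [hm]
    · exact abs_add_le _ _
    · linarith [abs_nonneg (v i)]
  calc l2 (z + v) ≤ l2 ((fun i => min |z i| M0) + fun i => |v i|) :=
        l2_le_l2 fun i => (hcoord i).trans (le_abs_self _)
    _ ≤ l2 (fun i => min |z i| M0) + l2 v := by
        simpa only [l2_abs] using l2_add_le (fun i => min |z i| M0) fun i => |v i|
    _ ≤ ∑ i, min |z i| M0 + l2 v := by
        gcongr
        refine l2_le_sum fun i => le_min (abs_nonneg _) ?_
        exact (abs_nonneg _).trans ((abs_le_l2 _ i).trans h)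

end L2

section OpNorm2

variable {m n : ℕ}

lemma bddAbove_opNorm2_set (A : Matrix (Fin m) (Fin n) ℝ) :
    BddAbove {c : ℝ | ∃ v : Fin n → ℝ, l2 v ≤ 1 ∧ c = l2 (A *ᵥ v)} := by
  set T := LinearMap.toContinuousLinearMap (Matrix.toEuclideanLin A)
  refine ⟨‖T‖, ?_⟩
  rintro c ⟨v, hv, rfl⟩
  have hT : l2 (A *ᵥ v) ≤ ‖T‖ * l2 v := by
    rw [l2_eq_norm, l2_eq_norm]; exact T.le_opNorm (WithLp.toLp 2 v)
  nlinarith [norm_nonneg T]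

lemma opNorm2_nonneg (A : Matrix (Fin m) (Fin n) ℝ) : 0 ≤ opNorm2 A :=
  le_csSup (bddAbove_opNorm2_set A) ⟨0, by simp [l2], by simp [l2]⟩

lemma l2_mulVec_le (A : Matrix (Fin m) (Fin n) ℝ) (v : Fin n → ℝ) :
    l2 (A *ᵥ v) ≤ opNorm2 A * l2 v := by
  rcases (l2_nonneg v).eq_or_lt with h0 | h0
  · rw [l2_eq_norm, eq_comm, norm_eq_zero, WithLp.toLp_eq_zero] at h0
    simp [h0, l2]
  · have hmem : (l2 v)⁻¹ * l2 (A *ᵥ v) ∈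
        {c : ℝ | ∃ w : Fin n → ℝ, l2 w ≤ 1 ∧ c = l2 (A *ᵥ w)} :=
      ⟨(l2 v)⁻¹ • v, by rw [l2_smul, abs_of_pos (inv_pos.2 h0), inv_mul_cancel₀ h0.ne'],
        by rw [mulVec_smul, l2_smul, abs_of_pos (inv_pos.2 h0)]⟩
    calc l2 (A *ᵥ v) = (l2 v)⁻¹ * l2 (A *ᵥ v) * l2 v := by field_simp
      _ ≤ opNorm2 A * l2 v := by gcongr; exact le_csSup (bddAbove_opNorm2_set A) hmem

lemma dotProduct_mulVec_le {k : ℕ} (u : Fin m → ℝ) (B : Matrix (Fin m) (Fin k) ℝ)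
    (w : Fin k → ℝ) : u ⬝ᵥ (B *ᵥ w) ≤ l2 u * (opNorm2 B * l2 w) :=
  (dotProduct_le_l2_mul_l2 _ _).trans <| mul_le_mul_of_nonneg_left (l2_mulVec_le B w) (l2_nonneg u)

end OpNorm2

lemma exists_add_mulVec_eq_zero_orthogonal {m n : ℕ} (A : Matrix (Fin m) (Fin n) ℝ)
    (h : Fin n → ℝ) :
    ∃ z v : Fin n → ℝ, h = z + v ∧ A *ᵥ z = 0 ∧ ∀ w, A *ᵥ w = 0 → v ⬝ᵥ w = 0 := by
  set K := LinearMap.ker (Matrix.toEuclideanLin A)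
  obtain ⟨z, hz, v, hv, hzv⟩ := K.exists_add_mem_mem_orthogonal (WithLp.toLp 2 h)
  refine ⟨z.ofLp, v.ofLp, congrArg WithLp.ofLp hzv, congrArg WithLp.ofLp hz, fun w hw => ?_⟩
  have := (K.mem_orthogonal' v).1 hv (WithLp.toLp 2 w) (congrArg (WithLp.toLp 2) hw)
  simpa [EuclideanSpace.inner_eq_star_dotProduct, dotProduct_comm] using this

namespace IsWCSM

variable {F : ℝ → ℝ} {ρ : ℝ}

lemma nonneg (hF : IsWCSM F ρ) (t : ℝ) : 0 ≤ F t := by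
  rcases le_total 0 t with h | h
  · simpa [hF.zero] using hF.mono 0 t le_rfl h
  · simpa [hF.zero, hF.even] using hF.mono 0 (-t) le_rfl (neg_nonneg.2 h)

lemma apply_abs (hF : IsWCSM F ρ) (t : ℝ) : F |t| = F t := by
  rcases abs_choice t with h | h <;> simp [h, hF.even]

lemma add_le_of_nonneg (hF : IsWCSM F ρ) {a b : ℝ} (ha : 0 ≤ a) (hb : 0 ≤ b) :
    F (a + b) ≤ F a + F b := by
  rcases ha.eq_or_lt with rfl | ha
  · simp [hF.zero]
  rcases hb.eq_or_lt with rfl | hb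
  · simp [hF.zero]
  have hab : 0 < a + b := by positivity
  have h1 := hF.ratio_anti a (a + b) ha (by linarith)
  have h2 := hF.ratio_anti b (a + b) hb (by linarith)
  rw [div_le_div_iff₀ hab ha] at h1
  rw [div_le_div_iff₀ hab hb] at h2
  nlinarith

lemma add_le (hF : IsWCSM F ρ) (s t : ℝ) : F (s + t) ≤ F s + F t := by
  rw [← hF.apply_abs (s + t), ← hF.apply_abs s, ← hF.apply_abs t]
  exact (hF.mono _ _ (abs_nonneg _) (abs_add_le s t)).trans
    (hF.add_le_of_nonneg (abs_nonneg s) (abs_nonneg t))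

lemma sub_le_apply_add (hF : IsWCSM F ρ) (s t : ℝ) : F s - F t ≤ F (s + t) := by
  have := hF.add_le (s + t) (-t)
  rw [add_neg_cancel_right, hF.even] at this
  linarith

lemma div_mul_min_le (hF : IsWCSM F ρ) {M0 : ℝ} (hM0 : 0 < M0) (u : ℝ) :
    F M0 / M0 * min |u| M0 ≤ F u := by
  rw [← hF.apply_abs u]
  rcases le_total |u| M0 with h | h
  · rw [min_eq_left h]
    rcases (abs_nonneg u).eq_or_lt with h0 | h0
    · simp [← h0, hF.zero]
    · have := hF.ratio_anti |u| M0 h0 h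
      rw [div_le_div_iff₀ hM0 h0] at this
      rw [div_mul_eq_mul_div, div_le_iff₀ hM0]
      exact this
  · rw [min_eq_right h, div_mul_cancel₀ _ hM0.ne']
    exact hF.mono M0 |u| hM0.le h

lemma apply_pos (hF : IsWCSM F ρ) {M0 : ℝ} (hM0 : 0 < M0) : 0 < F M0 := by
  obtain ⟨t, ht⟩ := hF.nontrivial
  rw [← hF.apply_abs] at ht
  have htF : 0 < F |t| := (hF.nonneg _).lt_of_ne' ht
  have htpos : 0 < |t| := (abs_nonneg t).lt_of_ne' fun h0 => ht (by rw [h0, hF.zero])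
  rcases le_total M0 |t| with h | h
  · have := hF.ratio_anti M0 |t| hM0 h
    rw [div_le_div_iff₀ htpos hM0] at this
    nlinarith
  · exact htF.trans_le (hF.mono _ _ (abs_nonneg t) h)

lemma alpha_nonneg (hF : IsWCSM F ρ) {α : ℝ} (hα : ∀ t, F t ≤ α * |t|) : 0 ≤ α := by
  simpa using (hF.apply_pos one_pos).le.trans (hα 1)

lemma mem_genGrad_iff {t f : ℝ} (ht : t ≠ 0) :
    f ∈ genGrad F t ↔
      ∀ ν : ℝ, ν * f ≤ limsup (fun θ => (F (t + θ * ν) - F t) / θ) (𝓝[>] 0) := by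
  simp [genGrad, ht]

lemma neg_mem_genGrad_neg (hF : IsWCSM F ρ) {t f : ℝ} (hf : f ∈ genGrad F t) :
    -f ∈ genGrad F (-t) := by
  rcases eq_or_ne t 0 with rfl | ht
  · simp_all [genGrad]
  rw [mem_genGrad_iff ht] at hf
  rw [mem_genGrad_iff (neg_ne_zero.2 ht)]
  intro ν
  have hq : (fun θ => (F (t + θ * -ν) - F t) / θ) = fun θ => (F (-t + θ * ν) - F (-t)) / θ := by
    funext θ
    rw [show -t + θ * ν = -(t + θ * -ν) by ring, hF.even, hF.even]
  have h := hf (-ν)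
  rw [hq] at h
  linarith

/-- The difference quotients are bounded below by `-α|ν|`, so their `limsup` is not the junk value
of a function unbounded below. -/
lemma limsup_diffQuot_le (hF : IsWCSM F ρ) {α : ℝ} (hα : ∀ t, F t ≤ α * |t|)
    {t ν c δ : ℝ} (hδ : 0 < δ) (hc : ∀ θ ∈ Ioo 0 δ, (F (t + θ * ν) - F t) / θ ≤ c) :
    limsup (fun θ => (F (t + θ * ν) - F t) / θ) (𝓝[>] 0) ≤ c := by
  refine limsup_le_of_le (isCoboundedUnder_le_of_eventually_le _ (x := -(α * |ν|)) ?_)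
    (eventually_of_mem (Ioo_mem_nhdsGT hδ) hc)
  filter_upwards [self_mem_nhdsWithin] with θ (hθ : 0 < θ)
  have h1 := hF.sub_le_apply_add t (θ * ν)
  have h2 := hα (θ * ν)
  rw [abs_mul, abs_of_pos hθ] at h2
  rw [le_div_iff₀ hθ]
  linarith

lemma nonneg_of_mem_genGrad (hF : IsWCSM F ρ) {α : ℝ} (hα : ∀ t, F t ≤ α * |t|) {t f : ℝ}
    (ht : 0 < t) (hf : f ∈ genGrad F t) : 0 ≤ f := by
  rw [mem_genGrad_iff ht.ne'] at hf
  have := (hf (-1)).trans <| hF.limsup_diffQuot_le hα ht fun θ hθ => by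
    refine div_nonpos_of_nonpos_of_nonneg ?_ hθ.1.le
    linarith [hF.mono (t + θ * -1) t (by linarith [hθ.2]) (by linarith [hθ.1])]
  linarith

lemma le_of_mem_genGrad (hF : IsWCSM F ρ) {α : ℝ} (hα : ∀ t, F t ≤ α * |t|) {t f : ℝ}
    (ht : 0 < t) (hf : f ∈ genGrad F t) : f ≤ α := by
  rw [mem_genGrad_iff ht.ne'] at hf
  have := (hf 1).trans <| hF.limsup_diffQuot_le hα (c := α) one_pos fun θ hθ => by
    have hθt : 0 < t + θ * 1 := by linarith [hθ.1]
    have hratio := hF.ratio_anti t (t + θ * 1) ht (by linarith [hθ.1])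
    have hFt := hα t
    rw [abs_of_pos ht] at hFt
    rw [div_le_div_iff₀ hθt ht] at hratio
    rw [div_le_iff₀ hθ.1]
    nlinarith [hθ.1]
  linarith

lemma subgradient_inequality_of_pos (hF : IsWCSM F ρ) {α : ℝ} (hα : ∀ t, F t ≤ α * |t|)
    {t f : ℝ} (ht : 0 < t) (hf : f ∈ genGrad F t) (s : ℝ) :
    F t + f * (s - t) + ρ * (s - t) ^ 2 ≤ F s := by
  have hρ := hF.rho_nonpos
  have key : ∀ s, 0 ≤ s → F t + f * (s - t) + ρ * (s - t) ^ 2 ≤ F s := by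
    intro s hs
    have hf' := (mem_genGrad_iff ht.ne').1 hf (s - t)
    have := hf'.trans <| hF.limsup_diffQuot_le hα (c := F s - F t - ρ * (s - t) ^ 2) one_pos
      fun θ hθ => by
        have hw := hF.wconv s t hs ht.le θ hθ.1.le hθ.2.le
        rw [show t + θ * (s - t) = θ * s + (1 - θ) * t by ring, div_le_iff₀ hθ.1]
        nlinarith [mul_nonneg (mul_nonneg (neg_nonneg.2 hρ) (sq_nonneg (s - t))) (sq_nonneg θ)]
    linarith
  rcases le_total 0 s with hs | hs
  · exact key s hs
  · -- `F s = F (-s)`, and `-s ≥ 0` is closer to `t` than `s` is, while `f ≥ 0`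
    have h := key (-s) (neg_nonneg.2 hs)
    rw [hF.even] at h
    have hf0 := hF.nonneg_of_mem_genGrad hα ht hf
    nlinarith [mul_nonneg hf0 (neg_nonneg.2 hs), mul_nonneg (mul_nonneg (neg_nonneg.2 hρ)
      (neg_nonneg.2 hs)) ht.le]

lemma subgradient_inequality (hF : IsWCSM F ρ) {α : ℝ} (hα : ∀ t, F t ≤ α * |t|)
    {t f : ℝ} (hf : f ∈ genGrad F t) (s : ℝ) :
    F t + f * (s - t) + ρ * (s - t) ^ 2 ≤ F s := by
  rcases lt_trichotomy t 0 with ht | rfl | ht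
  · have h := hF.subgradient_inequality_of_pos hα (neg_pos.2 ht) (hF.neg_mem_genGrad_neg hf) (-s)
    rw [hF.even, hF.even] at h
    linarith
  · simp only [genGrad, if_true, mem_singleton_iff] at hf
    subst hf
    nlinarith [hF.nonneg s, hF.zero, hF.rho_nonpos, sq_nonneg s]
  · exact hF.subgradient_inequality_of_pos hα ht hf s

lemma abs_le_of_mem_genGrad (hF : IsWCSM F ρ) {α : ℝ} (hα : ∀ t, F t ≤ α * |t|)
    {t f : ℝ} (hf : f ∈ genGrad F t) : |f| ≤ α := by
  rcases lt_trichotomy t 0 with ht | rfl | ht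
  · have hf' := hF.neg_mem_genGrad_neg hf
    have h1 := hF.le_of_mem_genGrad hα (neg_pos.2 ht) hf'
    have h2 := hF.nonneg_of_mem_genGrad hα (neg_pos.2 ht) hf'
    rw [abs_le]
    constructor <;> linarith
  · simp only [genGrad, if_true, mem_singleton_iff] at hf
    simpa [hf] using hF.alpha_nonneg hα
  · have h1 := hF.le_of_mem_genGrad hα ht hf
    have h2 := hF.nonneg_of_mem_genGrad hα ht hf
    rw [abs_le]
    constructor <;> linarith

variable {n : ℕ}

lemma sum_le_mul_sqrt_mul_l2 (hF : IsWCSM F ρ) {α : ℝ} (hα : ∀ t, F t ≤ α * |t|)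
    (v : Fin n → ℝ) : ∑ i, F (v i) ≤ α * Real.sqrt n * l2 v := by
  calc ∑ i, F (v i) ≤ α * ∑ i, |v i| := by
        rw [Finset.mul_sum]; exact Finset.sum_le_sum fun i _ => hα _
    _ ≤ α * Real.sqrt n * l2 v := by
        rw [mul_assoc]
        exact mul_le_mul_of_nonneg_left (sum_abs_le_sqrt_mul_l2 v) (hF.alpha_nonneg hα)

lemma sum_sub_sum_le_sum_add (hF : IsWCSM F ρ) (u v : Fin n → ℝ) :
    ∑ i, F (u i) - ∑ i, F (v i) ≤ ∑ i, F (u i + v i) := by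
  rw [← Finset.sum_sub_distrib]
  exact Finset.sum_le_sum fun i _ => hF.sub_le_apply_add _ _

lemma sum_apply_restr (hF : IsWCSM F ρ) (z : Fin n → ℝ) (S : Finset (Fin n)) :
    ∑ i, F (restr z S i) = ∑ i ∈ S, F (z i) := by
  rw [← Finset.sum_subset (Finset.subset_univ S) fun i _ hi => by simp [restr, hi, hF.zero]]
  exact Finset.sum_congr rfl fun i hi => by simp [restr, hi]

lemma div_mul_sub_le_sum (hF : IsWCSM F ρ) {M0 : ℝ} (hM0 : 0 < M0) {z v : Fin n → ℝ}
    (h : l2 (z + v) ≤ M0) : F M0 / M0 * (l2 (z + v) - l2 v) ≤ ∑ i, F (z i) := by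
  have hc : 0 ≤ F M0 / M0 := div_nonneg (hF.nonneg M0) hM0.le
  calc F M0 / M0 * (l2 (z + v) - l2 v) ≤ F M0 / M0 * ∑ i, min |z i| M0 := by
        gcongr; linarith [l2_add_le_sum_min_add h]
    _ ≤ ∑ i, F (z i) := by
        rw [Finset.mul_sum]; exact Finset.sum_le_sum fun i _ => hF.div_mul_min_le hM0 _

lemma mul_sum_le_sum_add_sub_sum {M K : ℕ} (hF : IsWCSM F ρ) {A : Matrix (Fin M) (Fin n) ℝ}
    {γ : ℝ} (hγ0 : 0 ≤ γ) (hNSC : NSCBound (fun x => ∑ i, F (x i)) A K γ)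
    {xs z : Fin n → ℝ} (hxs : l0 xs ≤ K) (hz : A *ᵥ z = 0) :
    (1 - γ) / (1 + γ) * ∑ i, F (z i) ≤ ∑ i, F (xs i + z i) - ∑ i, F (xs i) := by
  set S := Finset.univ.filter fun i => xs i ≠ 0
  have hS := hNSC z hz S hxs
  simp only [hF.sum_apply_restr] at hS
  have hoff : ∀ i ∈ Sᶜ, xs i = 0 := by simp [S]
  have hsplit : ∀ f : Fin n → ℝ, ∑ i, f i = ∑ i ∈ S, f i + ∑ i ∈ Sᶜ, f i := fun f =>
    (Finset.sum_add_sum_compl S f).symm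
  have hxsz : ∑ i ∈ S, F (xs i) - ∑ i ∈ S, F (z i) + ∑ i ∈ Sᶜ, F (z i)
      ≤ ∑ i, F (xs i + z i) := by
    rw [hsplit fun i => F (xs i + z i), ← Finset.sum_sub_distrib]
    exact add_le_add (Finset.sum_le_sum fun i _ => hF.sub_le_apply_add _ _)
      (Finset.sum_le_sum fun i hi => by simp [hoff i hi])
  have hxs_supp : ∑ i, F (xs i) = ∑ i ∈ S, F (xs i) := by
    rw [hsplit, Finset.sum_eq_zero (s := Sᶜ) fun i hi => by rw [hoff i hi, hF.zero], add_zero]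
  have hSc := Finset.sum_nonneg fun i (_ : i ∈ Sᶜ) => hF.nonneg (z i)
  rw [div_mul_eq_mul_div, div_le_iff₀ (by linarith), hsplit fun i => F (z i), hxs_supp]
  nlinarith

lemma mul_l2_sub_le_sum_sub_sum {M K : ℕ} (hF : IsWCSM F ρ) {α : ℝ} (hα : ∀ t, F t ≤ α * |t|)
    {M0 γ : ℝ} (hM0 : 0 < M0) (hγ0 : 0 ≤ γ) (hγ1 : γ ≤ 1) {A : Matrix (Fin M) (Fin n) ℝ}
    (hNSC : NSCBound (fun x => ∑ i, F (x i)) A K γ) {xs x z v : Fin n → ℝ} (hxs : l0 xs ≤ K)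
    (hzv : x - xs = z + v) (hz : A *ᵥ z = 0) (hball : l2 (x - xs) ≤ M0) :
    F M0 / M0 * ((1 - γ) / (1 + γ)) * l2 (x - xs)
        - (F M0 / M0 * ((1 - γ) / (1 + γ)) + α * Real.sqrt n) * l2 v
      ≤ ∑ i, F (x i) - ∑ i, F (xs i) := by
  have hx : ∀ i, x i = xs i + z i + v i := fun i => by
    have := congrFun hzv i
    simp only [Pi.sub_apply, Pi.add_apply] at this
    linarith
  have hxsz := hF.sum_sub_sum_le_sum_add (fun i => xs i + z i) v
  simp only [← hx] at hxsz
  have hv := hF.sum_le_mul_sqrt_mul_l2 hα v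
  have hgain := hF.mul_sum_le_sum_add_sub_sum hγ0 hNSC hxs hz
  rw [hzv] at hball ⊢
  have hz_lower := mul_le_mul_of_nonneg_left (hF.div_mul_sub_le_sum hM0 hball)
    (div_nonneg (sub_nonneg.2 hγ1) (by linarith) : 0 ≤ (1 - γ) / (1 + γ))
  linarith

lemma sum_sub_sum_add_mul_l2_sq_le (hF : IsWCSM F ρ) {α : ℝ} (hα : ∀ t, F t ≤ α * |t|)
    {x g : Fin n → ℝ} (hg : ∀ i, g i ∈ genGrad F (x i)) (xs : Fin n → ℝ) :
    ∑ i, F (x i) - ∑ i, F (xs i) + ρ * l2 (x - xs) ^ 2 ≤ (x - xs) ⬝ᵥ g := by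
  rw [l2_sq, Finset.mul_sum, dotProduct, ← Finset.sum_sub_distrib, ← Finset.sum_add_distrib]
  refine Finset.sum_le_sum fun i _ => ?_
  have := hF.subgradient_inequality hα (hg i) (xs i)
  simp only [Pi.sub_apply]
  linarith

lemma le_dotProduct_sub_of_mem_genGrad {M K : ℕ} (hF : IsWCSM F ρ) {α : ℝ} (hα : ∀ t, F t ≤ α * |t|)
    {M0 γ σ C1 C2 T : ℝ} (hM0 : 0 < M0) (hγ0 : 0 ≤ γ) (hγ1 : γ ≤ 1) (hσ : 0 < σ)
    (hC1 : C1 = F M0 / M0 * ((1 - γ) / (1 + γ))) (hC1pos : 0 < C1)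
    (hC2 : C2 = (α * Real.sqrt n + C1) / (C1 * σ)) {A : Matrix (Fin M) (Fin n) ℝ}
    (hNSC : NSCBound (fun x => ∑ i, F (x i)) A K γ) {xs x z v g : Fin n → ℝ} (hxs : l0 xs ≤ K)
    (hzv : x - xs = z + v) (hz : A *ᵥ z = 0) (hball : l2 (x - xs) ≤ M0)
    (hv : σ * l2 v ≤ T) (hrho : -4 * ρ * l2 (x - xs) ≤ C1)
    (hg : ∀ i, g i ∈ genGrad F (x i)) :
    3 * C1 / 4 * l2 (x - xs) - C1 * C2 * T ≤ (x - xs) ⬝ᵥ g := by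
  have hnsp := hF.mul_l2_sub_le_sum_sub_sum hα hM0 hγ0 hγ1 hNSC hxs hzv hz hball
  rw [← hC1] at hnsp
  have hsub := hF.sum_sub_sum_add_mul_l2_sq_le hα hg xs
  have hρ : -(C1 / 4) * l2 (x - xs) ≤ ρ * l2 (x - xs) ^ 2 := by
    linarith [mul_le_mul_of_nonneg_right hrho (l2_nonneg (x - xs))]
  have hC12 : C1 * C2 * σ = α * Real.sqrt n + C1 := by
    rw [hC2]; field_simp
  have hv' : (C1 + α * Real.sqrt n) * l2 v ≤ C1 * C2 * T := by
    have hC12n : 0 ≤ C1 * C2 := by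
      rw [hC2]; have := hF.alpha_nonneg hα; positivity
    calc (C1 + α * Real.sqrt n) * l2 v = C1 * C2 * (σ * l2 v) := by
          rw [← mul_assoc, hC12, add_comm]
      _ ≤ C1 * C2 * T := mul_le_mul_of_nonneg_left hv hC12n
  linarith

end IsWCSM

section Step

variable {m n : ℕ}

lemma l2_mulVec_sub_le_of_eq_add (A : Matrix (Fin m) (Fin n) ℝ) {x xs : Fin n → ℝ}
    {y e : Fin m → ℝ} (hy : y = A *ᵥ xs + e) :
    l2 (A *ᵥ (x - xs)) ≤ l2 e + l2 (y - A *ᵥ x) := by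
  have : A *ᵥ (x - xs) = e + -(y - A *ᵥ x) := by rw [hy, mulVec_sub]; abel
  rw [this, ← l2_neg (y - A *ᵥ x)]
  exact l2_add_le _ _

variable (A : Matrix (Fin m) (Fin n) ℝ) (B : Matrix (Fin m) (Fin m) ℝ)

lemma apgg_step_sub_eq (y : Fin m → ℝ) (κ : ℝ) (x xs g : Fin n → ℝ) :
    (Aᵀ * B) *ᵥ y + (1 - Aᵀ * B * A) *ᵥ (x - κ • g) - xs
      = x - xs - κ • ((1 - Aᵀ * B * A) *ᵥ g) + (Aᵀ * B) *ᵥ (y - A *ᵥ x) := by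
  rw [mulVec_sub, mulVec_sub, mulVec_smul, sub_mulVec _ _ x, one_mulVec, mulVec_mulVec]
  abel

lemma mulVec_one_sub_transpose_mul_mul_mulVec (u : Fin n → ℝ) :
    A *ᵥ ((1 - Aᵀ * B * A) *ᵥ u) = (1 - A * (Aᵀ * B)) *ᵥ (A *ᵥ u) := by
  simp only [mulVec_mulVec, Matrix.mul_sub, Matrix.sub_mul, Matrix.mul_one, Matrix.one_mul,
    Matrix.mul_assoc]

lemma dotProduct_sub_le_dotProduct_one_sub_mulVec (h g : Fin n → ℝ) :
    h ⬝ᵥ g - l2 (A *ᵥ h) * (opNorm2 B * l2 (A *ᵥ g)) ≤ h ⬝ᵥ ((1 - Aᵀ * B * A) *ᵥ g) := by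
  have : h ⬝ᵥ ((1 - Aᵀ * B * A) *ᵥ g) = h ⬝ᵥ g - (A *ᵥ h) ⬝ᵥ (B *ᵥ (A *ᵥ g)) := by
    rw [sub_mulVec, one_mulVec, dotProduct_sub, ← mulVec_mulVec, ← mulVec_mulVec,
      dotProduct_transpose_mulVec, dotProduct_comm (B *ᵥ _)]
  linarith [dotProduct_mulVec_le (A *ᵥ h) B (A *ᵥ g)]

lemma dotProduct_transpose_mul_mulVec_le (u : Fin n → ℝ) (r : Fin m → ℝ) :
    u ⬝ᵥ ((Aᵀ * B) *ᵥ r) ≤ l2 (A *ᵥ u) * (opNorm2 B * l2 r) := by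
  rw [← mulVec_mulVec, dotProduct_transpose_mulVec, dotProduct_comm]
  exact dotProduct_mulVec_le _ _ _

lemma l2_transpose_mul_mulVec_sq_le (r : Fin m → ℝ) :
    l2 ((Aᵀ * B) *ᵥ r) ^ 2 ≤ (1 + opNorm2 (1 - A * (Aᵀ * B))) * l2 r * (opNorm2 B * l2 r) := by
  have hAs : A *ᵥ ((Aᵀ * B) *ᵥ r) = r - (1 - A * (Aᵀ * B)) *ᵥ r := by
    rw [mulVec_mulVec, sub_mulVec, one_mulVec, sub_sub_cancel]
  have hle : l2 (A *ᵥ ((Aᵀ * B) *ᵥ r)) ≤ (1 + opNorm2 (1 - A * (Aᵀ * B))) * l2 r := by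
    rw [hAs, sub_eq_add_neg]
    linarith [l2_add_le r (-((1 - A * (Aᵀ * B)) *ᵥ r)), l2_neg ((1 - A * (Aᵀ * B)) *ᵥ r),
      l2_mulVec_le (1 - A * (Aᵀ * B)) r]
  rw [l2_sq_eq_dotProduct]
  exact (dotProduct_transpose_mul_mulVec_le A B _ r).trans <|
    mul_le_mul_of_nonneg_right hle (mul_nonneg (opNorm2_nonneg B) (l2_nonneg r))

lemma l2_sq_step_le {κ T β ζ : ℝ} (hκ : 0 ≤ κ) (hQ : opNorm2 (1 - A * (Aᵀ * B)) ≤ ζ)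
    {h g : Fin n → ℝ} (r : Fin m → ℝ) (hAh : l2 (A *ᵥ h) ≤ T) (hg : l2 g ≤ β) :
    l2 (h - κ • ((1 - Aᵀ * B * A) *ᵥ g) + (Aᵀ * B) *ᵥ r) ^ 2
      ≤ l2 h ^ 2 - 2 * κ * (h ⬝ᵥ g) + 2 * κ * T * (opNorm2 B * (opNorm2 A * β))
        + κ ^ 2 * (opNorm2 (1 - Aᵀ * B * A) * β) ^ 2
        + 2 * (T + κ * (ζ * (opNorm2 A * β))) * (opNorm2 B * l2 r)
        + (1 + ζ) * l2 r * (opNorm2 B * l2 r) := by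
  set Q := 1 - A * (Aᵀ * B)
  set w := (1 - Aᵀ * B * A) *ᵥ g
  have hT : 0 ≤ T := (l2_nonneg _).trans hAh
  have hb := opNorm2_nonneg B
  have hR := l2_nonneg r
  have hAg : l2 (A *ᵥ g) ≤ opNorm2 A * β :=
    (l2_mulVec_le A g).trans (mul_le_mul_of_nonneg_left hg (opNorm2_nonneg A))
  have hw : l2 w ≤ opNorm2 (1 - Aᵀ * B * A) * β :=
    (l2_mulVec_le _ g).trans (mul_le_mul_of_nonneg_left hg (opNorm2_nonneg _))
  have hhw : h ⬝ᵥ g - T * (opNorm2 B * (opNorm2 A * β)) ≤ h ⬝ᵥ w := by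
    refine le_trans ?_ (dotProduct_sub_le_dotProduct_one_sub_mulVec A B h g)
    gcongr
    exact mul_nonneg hb (l2_nonneg _)
  have hAu : l2 (A *ᵥ (h - κ • w)) ≤ T + κ * (ζ * (opNorm2 A * β)) := by
    rw [mulVec_sub, mulVec_smul, mulVec_one_sub_transpose_mul_mul_mulVec, sub_eq_add_neg,
      ← neg_smul]
    refine (l2_add_le _ _).trans (add_le_add hAh ?_)
    rw [l2_smul, abs_neg, abs_of_nonneg hκ]
    gcongr
    exact (l2_mulVec_le Q _).trans (mul_le_mul hQ hAg (l2_nonneg _) ((opNorm2_nonneg Q).trans hQ))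
  have hcross := (dotProduct_transpose_mul_mulVec_le A B (h - κ • w) r).trans <|
    mul_le_mul_of_nonneg_right hAu (mul_nonneg hb hR)
  have hs := (l2_transpose_mul_mulVec_sq_le A B r).trans <|
    mul_le_mul_of_nonneg_right (mul_le_mul_of_nonneg_right (add_le_add_right hQ 1) hR)
      (mul_nonneg hb hR)
  have hw2 : κ ^ 2 * l2 w ^ 2 ≤ κ ^ 2 * (opNorm2 (1 - Aᵀ * B * A) * β) ^ 2 := by
    gcongr; exact l2_nonneg w
  rw [l2_add_sq, l2_sub_smul_sq]
  linarith [mul_le_mul_of_nonneg_left hhw hκ]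

end Step

/-- The constants are chosen so that this budget closes: the terms in `κ²` are paid for by
`C3`, those in `κ‖e‖` by `C4`. -/
lemma apgg_budget {C1 C2 C3 C4 C5 C6 C7 d α n a b ζ κ μ E R H : ℝ}
    (hC1 : 0 < C1) (hC2 : 0 ≤ C2) (hC5 : 0 ≤ C5) (hα : 0 ≤ α) (ha : 0 ≤ a) (hb : 0 ≤ b)
    (hζ : 0 ≤ ζ) (hκ : 0 < κ) (hμ : 1 < μ) (hE : 0 ≤ E) (hR0 : 0 ≤ R)
    (hR : R ≤ C5 * κ)
    (hC6 : C6 = 2 * b * C5 / C1 * (2 * (1 + ζ) * α * Real.sqrt n * a + (3 + ζ) * C5))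
    (hC7 : C7 = 4 * b / C1 * (α * Real.sqrt n * a + C5))
    (hC3 : C3 = max (2 * C2 * C5) (2 * d * α ^ 2 * n / C1 + C6))
    (hC4 : C4 = max (2 * C2) C7)
    (hfar : μ * C3 * κ + C4 * E ≤ H) :
    μ * d * α ^ 2 * n * κ ^ 2
      + 2 * κ * (C1 * C2 + b * (a * (α * Real.sqrt n))) * (E + R)
      + 2 * (E + R + κ * (ζ * (a * (α * Real.sqrt n)))) * (b * R)
      + (1 + ζ) * R * (b * R)
      ≤ 3 * C1 / 2 * κ * H := by
  set β := α * Real.sqrt n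
  have hβ : 0 ≤ β := mul_nonneg hα (Real.sqrt_nonneg n)
  have hC6' : C1 * C6 = 2 * b * C5 * (2 * (1 + ζ) * β * a + (3 + ζ) * C5) := by
    rw [hC6]; field_simp; ring
  have hC7' : C1 * C7 = 4 * b * (β * a + C5) := by
    rw [hC7]; field_simp
  have hC3a : 2 * C2 * C5 ≤ C3 := hC3 ▸ le_max_left _ _
  have hC3b : 2 * d * α ^ 2 * n + C1 * C6 ≤ C1 * C3 := by
    have := mul_le_mul_of_nonneg_left (hC3 ▸ le_max_right _ _ : 2 * d * α ^ 2 * n / C1 + C6 ≤ C3)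
      hC1.le
    rwa [mul_add, mul_div_cancel₀ _ hC1.ne'] at this
  have hC4a : 2 * C2 ≤ C4 := hC4 ▸ le_max_left _ _
  have hC4b : C7 ≤ C4 := hC4 ▸ le_max_right _ _
  have hC6n : 0 ≤ C1 * C6 := by rw [hC6']; positivity
  have hC3n : 0 ≤ C3 := (by positivity : 0 ≤ 2 * C2 * C5).trans hC3a
  have hquad : μ * d * α ^ 2 * n + 2 * C1 * C2 * C5 + C1 * C6 / 2 ≤ 3 * μ / 2 * (C1 * C3) := by
    nlinarith [mul_le_mul_of_nonneg_left hC3a hC1.le, mul_nonneg (sub_nonneg.2 hμ.le) hC6n,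
      mul_nonneg (sub_nonneg.2 hμ.le) (mul_nonneg hC1.le hC3n)]
  have hlin : 2 * C1 * C2 + C1 * C7 / 2 ≤ 3 / 2 * (C1 * C4) := by
    linarith [mul_le_mul_of_nonneg_left hC4a hC1.le, mul_le_mul_of_nonneg_left hC4b hC1.le]
  calc μ * d * α ^ 2 * n * κ ^ 2
        + 2 * κ * (C1 * C2 + b * (a * β)) * (E + R)
        + 2 * (E + R + κ * (ζ * (a * β))) * (b * R)
        + (1 + ζ) * R * (b * R)
      ≤ μ * d * α ^ 2 * n * κ ^ 2
        + 2 * κ * (C1 * C2 + b * (a * β)) * (E + C5 * κ)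
        + 2 * (E + C5 * κ + κ * (ζ * (a * β))) * (b * (C5 * κ))
        + (1 + ζ) * (C5 * κ) * (b * (C5 * κ)) := by gcongr
    _ = κ ^ 2 * (μ * d * α ^ 2 * n + 2 * C1 * C2 * C5 + C1 * C6 / 2)
        + κ * E * (2 * C1 * C2 + C1 * C7 / 2) := by
      linear_combination (-κ ^ 2 / 2) * hC6' - κ * E / 2 * hC7'
    _ ≤ κ ^ 2 * (3 * μ / 2 * (C1 * C3)) + κ * E * (3 / 2 * (C1 * C4)) := by gcongr
    _ = 3 * C1 / 2 * κ * (μ * C3 * κ + C4 * E) := by ring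
    _ ≤ 3 * C1 / 2 * κ * H := by gcongr

theorem stmt16_general {M N : ℕ} (F : ℝ → ℝ) (ρ α : ℝ)
    (hF : IsWCSM F ρ) (hα : IsAlpha F α)
    (A : Matrix (Fin M) (Fin N) ℝ) (B : Matrix (Fin M) (Fin M) ℝ) (K : ℕ)
    (γ : ℝ) (hγ0 : 0 ≤ γ) (hγ1 : γ < 1)
    (hNSC : NSCBound (fun x => ∑ i, F (x i)) A K γ)
    (σ : ℝ) (hσ : 0 < σ)
    (hσmin : ∀ v : Fin N → ℝ,
      (∀ z : Fin N → ℝ, A.mulVec z = 0 → (∑ i, v i * z i) = 0) →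
      σ * l2 v ≤ l2 (A.mulVec v))
    (M0 : ℝ) (hM0 : 0 < M0)
    (ζ : ℝ) (hζ : opNorm2 (1 - A * (A.transpose * B)) ≤ ζ)
    (C1 C2 C3 C4 C5 C6 C7 d : ℝ)
    (hC1 : C1 = F M0 / M0 * ((1 - γ) / (1 + γ)))
    (hC2 : C2 = (α * Real.sqrt N + C1) / (C1 * σ))
    (hC6 : C6 = 2 * opNorm2 B * C5 / C1 *
      (2 * (1 + ζ) * α * Real.sqrt N * opNorm2 A + (3 + ζ) * C5))
    (hC7 : C7 = 4 * opNorm2 B / C1 * (α * Real.sqrt N * opNorm2 A + C5))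
    (hd : d = opNorm2 (1 - A.transpose * B * A) ^ 2)
    (hC3 : C3 = max (2 * C2 * C5) (2 * d * α ^ 2 * N / C1 + C6))
    (hC4 : C4 = max (2 * C2) C7)
    (xs : Fin N → ℝ) (hxs : l0 xs ≤ K)
    (e : Fin M → ℝ) (y : Fin M → ℝ) (hy : y = A.mulVec xs + e)
    (κ μ : ℝ) (hκ : 0 < κ) (hμ : 1 < μ)
    (x : Fin N → ℝ)
    (hball : l2 (x - xs) ≤ M0)
    (hrho : -4 * ρ * l2 (x - xs) ≤ C1)
    (hres : l2 (y - A.mulVec x) ≤ C5 * κ)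
    (hfar : μ * C3 * κ + C4 * l2 e ≤ l2 (x - xs))
    (g : Fin N → ℝ) (hg : ∀ i, g i ∈ genGrad F (x i))
    (xp : Fin N → ℝ)
    (hxp : xp = (A.transpose * B).mulVec y + (1 - A.transpose * B * A).mulVec (x - κ • g)) :
    l2 (xp - xs) ^ 2 ≤ l2 (x - xs) ^ 2 - (μ - 1) * d * α ^ 2 * N * κ ^ 2 := by
  have hC1pos : 0 < C1 :=
    hC1 ▸ mul_pos (div_pos (hF.apply_pos hM0) hM0) (div_pos (by linarith) (by linarith))
  have hC2n : 0 ≤ C2 := by rw [hC2]; have := hα.1; positivity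
  have hC5n : 0 ≤ C5 := nonneg_of_mul_nonneg_left ((l2_nonneg _).trans hres) hκ
  obtain ⟨z, v, hzv, hz, hv⟩ := exists_add_mulVec_eq_zero_orthogonal A (x - xs)
  have hAh := l2_mulVec_sub_le_of_eq_add A (x := x) hy
  have hσv : σ * l2 v ≤ l2 e + l2 (y - A *ᵥ x) := by
    refine (hσmin v hv).trans (le_of_eq_of_le ?_ hAh)
    rw [hzv, mulVec_add, hz, zero_add]
  have hgain := hF.le_dotProduct_sub_of_mem_genGrad hα.2.2 hM0 hγ0 hγ1.le hσ hC1 hC1pos hC2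
    hNSC hxs hzv hz hball hσv hrho hg
  have hg2 := l2_le_of_abs_le hα.1.le fun i => hF.abs_le_of_mem_genGrad hα.2.2 (hg i)
  have hstep := l2_sq_step_le A B hκ.le hζ (y - A *ᵥ x) hAh hg2
  have hbudget := apgg_budget hC1pos hC2n hC5n hα.1.le (opNorm2_nonneg A) (opNorm2_nonneg B)
    ((opNorm2_nonneg _).trans hζ) hκ hμ (l2_nonneg e) (l2_nonneg _) hres hC6 hC7 hC3 hC4 hfar
  have hd' : κ ^ 2 * (opNorm2 (1 - Aᵀ * B * A) * (α * Real.sqrt N)) ^ 2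
      = d * α ^ 2 * N * κ ^ 2 := by
    rw [hd, mul_pow, mul_pow, Real.sq_sqrt (Nat.cast_nonneg N)]; ring
  rw [hxp, apgg_step_sub_eq]
  linarith [mul_le_mul_of_nonneg_left hgain (by positivity : (0 : ℝ) ≤ 2 * κ)]

/-- Lemma 8, one APGG step: under the stated conditions the next
APGG iterate satisfies `‖x⁺ − x*‖₂² ≤ ‖x − x*‖₂² − (μ−1)dα²Nκ²`. -/
theorem stmt16 {M N : ℕ} (hMN : M < N) (F : ℝ → ℝ) (ρ α : ℝ)
    (hF : IsWCSM F ρ) (hα : IsAlpha F α)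
    (A : Matrix (Fin M) (Fin N) ℝ) (B : Matrix (Fin M) (Fin M) ℝ) (K : ℕ)
    (γ : ℝ) (hγ0 : 0 ≤ γ) (hγ1 : γ < 1)
    (hNSC : NSCBound (fun x => ∑ i, F (x i)) A K γ)
    (σ : ℝ) (hσ : 0 < σ)
    (hσmin : ∀ v : Fin N → ℝ,
      (∀ z : Fin N → ℝ, A.mulVec z = 0 → (∑ i, v i * z i) = 0) →
      σ * l2 v ≤ l2 (A.mulVec v))
    (M0 : ℝ) (hM0 : 0 < M0)
    (ζ : ℝ) (hζ : opNorm2 (1 - A * (A.transpose * B)) ≤ ζ) (hζ1 : ζ < 1)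
    (C1 C2 C3 C4 C5 C6 C7 d : ℝ)
    (hC1 : C1 = F M0 / M0 * ((1 - γ) / (1 + γ)))
    (hC2 : C2 = (α * Real.sqrt N + C1) / (C1 * σ))
    (hC5 : C5 = 2 * (ζ * α * Real.sqrt N * opNorm2 A) / (1 - ζ))
    (hC6 : C6 = 2 * opNorm2 B * C5 / C1 *
      (2 * (1 + ζ) * α * Real.sqrt N * opNorm2 A + (3 + ζ) * C5))
    (hC7 : C7 = 4 * opNorm2 B / C1 * (α * Real.sqrt N * opNorm2 A + C5))
    (hd : d = opNorm2 (1 - A.transpose * B * A) ^ 2)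
    (hC3 : C3 = max (2 * C2 * C5) (2 * d * α ^ 2 * N / C1 + C6))
    (hC4 : C4 = max (2 * C2) C7)
    (xs : Fin N → ℝ) (hxs : l0 xs ≤ K)
    (e : Fin M → ℝ) (y : Fin M → ℝ) (hy : y = A.mulVec xs + e)
    (κ μ : ℝ) (hκ : 0 < κ) (hμ : 1 < μ)
    (x : Fin N → ℝ)
    (hball : l2 (x - xs) ≤ M0)
    (hrho : -4 * ρ * l2 (x - xs) ≤ C1)
    (hres : l2 (y - A.mulVec x) ≤ C5 * κ)
    (hfar : μ * C3 * κ + C4 * l2 e ≤ l2 (x - xs))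
    (g : Fin N → ℝ) (hg : ∀ i, g i ∈ genGrad F (x i))
    (xp : Fin N → ℝ)
    (hxp : xp = (A.transpose * B).mulVec y + (1 - A.transpose * B * A).mulVec (x - κ • g)) :
    l2 (xp - xs) ^ 2 ≤ l2 (x - xs) ^ 2 - (μ - 1) * d * α ^ 2 * N * κ ^ 2 :=
  stmt16_general F ρ α hF hα A B K γ hγ0 hγ1 hNSC σ hσ hσmin M0 hM0 ζ hζ C1 C2 C3 C4 C5 C6 C7 d hC1
    hC2 hC6 hC7 hd hC3 hC4 xs hxs e y hy κ μ hκ hμ x hball hrho hres hfar g hg xp hxp
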